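/- arXiv:2302.03647 — 8 statements merged into one kernel-verified Lean document; each statement's English description precedes it below -/
import Mathlib

section
/- Let G and H be two DAGs on the same vertex set with the same skeleton (underlying undirected graph). If G and H are not identical, then there exists an edge i → j in G with i ← j in H such that reversing the edge i → j in G yields a directed graph that is still acyclic. -/
def Acyclic {V : Type*} (R : V → V → Prop) : Prop :=
  ∀ v, ¬ Relation.TransGen R v v

open Classical in
noncomputable def cimset {V : Type*} (G : V → V → Prop) (S : Finset V) : ℕ :=
  if ∃ i ∈ S, ∀ j ∈ S, j ≠ i → G j i then 1 else 0

/-!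
Among the edges `i → j` of `G` that `H` reverses, pick one whose interval
`{k | i ≤ k ≤ j}` in the reachability order of `G` has the fewest vertices. If reversing it
created a cycle, `G` would contain a second path from `i` to `j`. That path cannot lie in `H`
(with `j → i` it would close a cycle of `H`), so `H` reverses one of its edges `x → y`;
but then the interval of `x → y` is strictly contained in that of `i → j`.
-/

open Relation

section Reversal

variable {V : Type*}

def deleteEdge (G : V → V → Prop) (i j : V) : V → V → Prop :=
  fun a b => ¬(a = i ∧ b = j) ∧ G a b

theorem deleteEdge_le (G : V → V → Prop) (i j : V) : deleteEdge G i j ≤ G :=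
  fun _ _ h => h.2

def reverseEdge (G : V → V → Prop) (i j : V) : V → V → Prop :=
  fun a b => (a = j ∧ b = i) ∨ deleteEdge G i j a b

theorem Acyclic.eq_of_reflTransGen {R : V → V → Prop} (hR : Acyclic R) {a b : V}
    (hab : ReflTransGen R a b) (hba : ReflTransGen R b a) : a = b := by
  rcases hab.cases_head with h | ⟨c, hac, hcb⟩
  · exact h
  · exact absurd ((TransGen.head' hac hcb).trans_left hba) (hR a)

theorem transGen_insert_edge {R : V → V → Prop} {i j a b : V}
    (h : TransGen (fun x y => (x = j ∧ y = i) ∨ R x y) a b) :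
    TransGen R a b ∨ (ReflTransGen R a j ∧ ReflTransGen R i b) ∨ ReflTransGen R i j := by
  induction h with
  | single hab =>
    rcases hab with ⟨rfl, rfl⟩ | hab
    · exact .inr (.inl ⟨.refl, .refl⟩)
    · exact .inl (.single hab)
  | tail _ hbc ih =>
    rcases hbc with ⟨rfl, rfl⟩ | hbc
    · rcases ih with ih | ⟨-, hib⟩ | hij
      · exact .inr (.inl ⟨ih.to_reflTransGen, .refl⟩)
      · exact .inr (.inr hib)
      · exact .inr (.inr hij)
    · rcases ih with ih | ⟨haj, hib⟩ | hij
      · exact .inl (ih.tail hbc)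
      · exact .inr (.inl ⟨haj, hib.tail hbc⟩)
      · exact .inr (.inr hij)

theorem reflTransGen_deleteEdge_of_not_acyclic_reverseEdge {G : V → V → Prop} {i j : V}
    (hG : Acyclic G) (hrev : ¬ Acyclic (reverseEdge G i j)) :
    ReflTransGen (deleteEdge G i j) i j := by
  obtain ⟨v, hv⟩ := not_forall.mp hrev
  rcases transGen_insert_edge (not_not.mp hv) with hcyc | ⟨hvj, hiv⟩ | hij
  · exact absurd (TransGen.mono (deleteEdge_le G i j) _ _ hcyc) (hG v)
  · exact hiv.trans hvj
  · exact hij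

theorem reflTransGen_or_exists_reversed_edge {R H : V → V → Prop}
    (hRH : ∀ a b, R a b → H a b ∨ H b a) {a b : V} (h : ReflTransGen R a b) :
    ReflTransGen H a b ∨
      ∃ x y, R x y ∧ H y x ∧ ReflTransGen R a x ∧ ReflTransGen R y b := by
  induction h with
  | refl => exact .inl .refl
  | @tail c d hac hcd ih =>
    rcases ih with ih | ⟨x, y, hxy, hyx, hax, hyc⟩
    · rcases hRH c d hcd with hH | hH
      · exact .inl (ih.tail hH)
      · exact .inr ⟨c, d, hcd, hH, hac, .refl⟩
    · exact .inr ⟨x, y, hxy, hyx, hax, hyc.tail hcd⟩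

theorem exists_reversed_edge_of_ne {G H : V → V → Prop}
    (hskel : ∀ a b, (G a b ∨ G b a) ↔ (H a b ∨ H b a)) (hne : G ≠ H) :
    ∃ a b, G a b ∧ H b a := by
  by_contra! hrev
  refine hne (funext₂ fun a b => propext ⟨fun hab => ?_, fun hab => ?_⟩)
  · exact ((hskel a b).mp (.inl hab)).resolve_right (hrev a b hab)
  · exact ((hskel a b).mpr (.inl hab)).resolve_right fun hba => hrev b a hba hab

section Interval

variable [Fintype V]

open Classical in
noncomputable def reachInterval (G : V → V → Prop) (a b : V) : Finset V :=
  Finset.univ.filter fun k => ReflTransGen G a k ∧ ReflTransGen G k b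

theorem mem_reachInterval {G : V → V → Prop} {a b k : V} :
    k ∈ reachInterval G a b ↔ ReflTransGen G a k ∧ ReflTransGen G k b := by
  simp [reachInterval]

theorem reachInterval_ssubset {G : V → V → Prop} (hG : Acyclic G) {i j x y : V}
    (hij : ReflTransGen G i j) (hix : ReflTransGen G i x) (hyj : ReflTransGen G y j)
    (hne : ¬(x = i ∧ y = j)) :
    reachInterval G x y ⊂ reachInterval G i j := by
  have hsub : reachInterval G x y ⊆ reachInterval G i j := fun k hk => by
    rw [mem_reachInterval] at hk ⊢
    exact ⟨hix.trans hk.1, hk.2.trans hyj⟩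
  rw [Finset.ssubset_iff_of_subset hsub]
  by_cases hxi : x = i
  · refine ⟨j, mem_reachInterval.mpr ⟨hij, .refl⟩, fun hj => ?_⟩
    exact hne ⟨hxi, hG.eq_of_reflTransGen hyj (mem_reachInterval.mp hj).2⟩
  · refine ⟨i, mem_reachInterval.mpr ⟨.refl, hij⟩, fun hi => ?_⟩
    exact hxi (hG.eq_of_reflTransGen hix (mem_reachInterval.mp hi).1).symm

end Interval

end Reversal

theorem stmt1 {V : Type*} [Fintype V] (G H : V → V → Prop)
    (hG : Acyclic G) (hH : Acyclic H)
    (hskel : ∀ a b, (G a b ∨ G b a) ↔ (H a b ∨ H b a))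
    (hne : G ≠ H) :
    ∃ i j, G i j ∧ H j i ∧
      Acyclic (fun a b => (a = j ∧ b = i) ∨ (¬(a = i ∧ b = j) ∧ G a b)) := by
  obtain ⟨a, b, hrev⟩ := exists_reversed_edge_of_ne hskel hne
  obtain ⟨⟨i, j⟩, ⟨hGij, hHji⟩, hmin⟩ :=
    Set.exists_min_image {p : V × V | G p.1 p.2 ∧ H p.2 p.1}
      (fun p => (reachInterval G p.1 p.2).card) (Set.toFinite _) ⟨(a, b), hrev⟩
  refine ⟨i, j, hGij, hHji, fun v hv => ?_⟩
  have hpath := reflTransGen_deleteEdge_of_not_acyclic_reverseEdge (i := i) (j := j) hG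
    (fun hacyc => hacyc v hv)
  have hundirected : ∀ a b, deleteEdge G i j a b → H a b ∨ H b a :=
    fun a b hab => (hskel a b).mp (.inl hab.2)
  rcases reflTransGen_or_exists_reversed_edge hundirected hpath with
    hHij | ⟨x, y, hxy, hHyx, hix, hyj⟩
  · exact hH i (TransGen.tail' hHij hHji)
  · have hlt := Finset.card_lt_card <| reachInterval_ssubset hG (.single hGij)
      (ReflTransGen.mono (deleteEdge_le G i j) _ _ hix)
      (ReflTransGen.mono (deleteEdge_le G i j) _ _ hyj) hxy.1
    exact hlt.not_ge (hmin (x, y) ⟨hxy.2, hHyx⟩)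
end

section
/- Let G and H be two DAGs on vertex set [n] with the same skeleton having edge set E. Then there exists a sequence of DAGs G = G_0, G_1, ..., G_k = H with k ≤ |E| such that each G_{t+1} is obtained from G_t by reversing a single directed edge. -/
def AcyclicF {V : Type*} (G : Finset (V × V)) : Prop :=
  ∀ v, ¬ Relation.TransGen (fun a b => (a, b) ∈ G) v v

/-
Call an arc of `G` a disagreement if `H` contains its reverse. Acyclicity rules out 2-cycles, so
there are at most |E| disagreements, and `G = H` when there are none. Reversing a disagreement
`(v, w)` removes exactly one of them, and keeps `G` acyclic as long as `G` has no other path from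
`v` to `w`. Such a disagreement exists: take one minimising `α w - α v`, where `α x` counts the
ancestors of `x` in `G`. Another path from `v` to `w` cannot lie in `H` (with `w → v` it would
close a cycle), so it traverses a disagreement nested strictly inside `(v, w)`, whose `α`-gap is
smaller.
-/

namespace ArcSet

open Relation Finset

variable {V : Type*}

abbrev arcRel (G : Finset (V × V)) : V → V → Prop := fun a b => (a, b) ∈ G

theorem swap_notMem_of_acyclic {G : Finset (V × V)} (hG : AcyclicF G) {a b : V}
    (hab : (a, b) ∈ G) : (b, a) ∉ G :=
  fun hba => hG a ((TransGen.single (r := arcRel G) hab).tail hba)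

theorem transGen_or_exists_reversed {r s : V → V → Prop} (hrs : ∀ a b, r a b → s a b ∨ s b a)
    {x y : V} (h : TransGen r x y) :
    TransGen s x y ∨ ∃ a b, r a b ∧ s b a ∧ ReflTransGen r x a ∧ ReflTransGen r b y := by
  induction h with
  | @single b hxb =>
    rcases hrs x b hxb with hs | hs
    · exact .inl (.single hs)
    · exact .inr ⟨x, b, hxb, hs, .refl, .refl⟩
  | @tail b c hxb hbc ih =>
    rcases ih with ih | ⟨a, b', hab', hs, hxa, hb'b⟩
    · rcases hrs b c hbc with hs | hs
      · exact .inl (ih.tail hs)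
      · exact .inr ⟨b, c, hbc, hs, hxb.to_reflTransGen, .refl⟩
    · exact .inr ⟨a, b', hab', hs, hxa, hb'b.tail hbc⟩

noncomputable def numAncestors (G : Finset (V × V)) (x : V) : ℕ :=
  {a | TransGen (arcRel G) a x}.ncard

theorem finite_setOf_transGen (G : Finset (V × V)) (x : V) :
    {a | TransGen (arcRel G) a x}.Finite := by
  classical
  refine (G.image Prod.fst).finite_toSet.subset fun a ha => ?_
  obtain ⟨b, hab, -⟩ := TransGen.head'_iff.mp ha
  exact mem_image_of_mem Prod.fst hab

theorem numAncestors_le_of_reflTransGen (G : Finset (V × V)) {a b : V}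
    (h : ReflTransGen (arcRel G) a b) : numAncestors G a ≤ numAncestors G b :=
  Set.ncard_le_ncard (fun _ hc => TransGen.trans_left hc h) (finite_setOf_transGen G b)

theorem numAncestors_lt_of_transGen {G : Finset (V × V)} (hG : AcyclicF G) {a b : V}
    (h : TransGen (arcRel G) a b) : numAncestors G a < numAncestors G b := by
  refine Set.ncard_lt_ncard ⟨fun _ hc => hc.trans h, fun hsub => hG a (hsub h)⟩
    (finite_setOf_transGen G b)

theorem numAncestors_sub_lt_of_nested {G : Finset (V × V)} (hG : AcyclicF G) {v w a b : V}
    (hva : ReflTransGen (arcRel G) v a) (hbw : ReflTransGen (arcRel G) b w)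
    (hne : (a, b) ≠ (v, w)) :
    (numAncestors G b : ℤ) - numAncestors G a < numAncestors G w - numAncestors G v := by
  have h₁ := numAncestors_le_of_reflTransGen G hva
  have h₂ := numAncestors_le_of_reflTransGen G hbw
  rcases reflTransGen_iff_eq_or_transGen.mp hva with rfl | hva
  · rcases reflTransGen_iff_eq_or_transGen.mp hbw with rfl | hbw
    · exact absurd rfl hne
    · have := numAncestors_lt_of_transGen hG hbw
      omega
  · have := numAncestors_lt_of_transGen hG hva
    omega

variable [DecidableEq V]

def skeleton (G : Finset (V × V)) : Finset (Sym2 V) := G.image (fun p => s(p.1, p.2))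

def reverseArc (G : Finset (V × V)) (i j : V) : Finset (V × V) := insert (j, i) (G.erase (i, j))

def disagreements (G H : Finset (V × V)) : Finset (V × V) := G.filter (fun p => (p.2, p.1) ∈ H)

def IsReversalSequence (F : ℕ → Finset (V × V)) (k : ℕ) : Prop :=
  (∀ t ≤ k, AcyclicF (F t)) ∧ ∀ t < k, ∃ i j, (i, j) ∈ F t ∧ F (t + 1) = reverseArc (F t) i j

theorem mem_or_swap_mem_of_skeleton_eq {G H : Finset (V × V)} (hGH : skeleton G = skeleton H)
    {a b : V} (hab : (a, b) ∈ G) : (a, b) ∈ H ∨ (b, a) ∈ H := by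
  have : s(a, b) ∈ skeleton H := hGH ▸ mem_image_of_mem (fun p => s(p.1, p.2)) hab
  obtain ⟨⟨c, d⟩, hcd, h⟩ := mem_image.mp this
  rcases Sym2.eq_iff.mp h with ⟨rfl, rfl⟩ | ⟨rfl, rfl⟩
  · exact .inl hcd
  · exact .inr hcd

theorem card_skeleton_of_acyclic {G : Finset (V × V)} (hG : AcyclicF G) :
    (skeleton G).card = G.card := by
  refine card_image_of_injOn ?_
  rintro ⟨a, b⟩ hab ⟨c, d⟩ hcd h
  rcases Sym2.eq_iff.mp h with ⟨rfl, rfl⟩ | ⟨rfl, rfl⟩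
  · rfl
  · exact absurd hcd (swap_notMem_of_acyclic hG hab)

theorem skeleton_reverseArc {G : Finset (V × V)} {v w : V} (hvw : (v, w) ∈ G) :
    skeleton (reverseArc G v w) = skeleton G := by
  ext e
  simp only [skeleton, reverseArc, mem_image, mem_insert, mem_erase]
  constructor
  · rintro ⟨p, rfl | ⟨-, hp⟩, rfl⟩
    exacts [⟨(v, w), hvw, Sym2.eq_swap⟩, ⟨p, hp, rfl⟩]
  · rintro ⟨p, hp, rfl⟩
    by_cases hpe : p = (v, w)
    · exact ⟨(w, v), .inl rfl, by rw [hpe]; exact Sym2.eq_swap⟩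
    · exact ⟨p, .inr ⟨hpe, hp⟩, rfl⟩

theorem disagreements_reverseArc {G H : Finset (V × V)} {v w : V} (hvw : (v, w) ∉ H) :
    disagreements (reverseArc G v w) H = (disagreements G H).erase (v, w) := by
  ext ⟨a, b⟩
  simp only [disagreements, reverseArc, mem_filter, mem_insert, mem_erase, Prod.mk.injEq]
  constructor
  · rintro ⟨⟨rfl, rfl⟩ | hab, hba⟩
    exacts [absurd hba hvw, ⟨hab.1, hab.2, hba⟩]
  · rintro ⟨hne, hab, hba⟩
    exact ⟨.inr ⟨hne, hab⟩, hba⟩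

theorem eq_of_disagreements_eq_empty {G H : Finset (V × V)} (hGH : skeleton G = skeleton H)
    (hD : disagreements G H = ∅) : G = H := by
  have hnot : ∀ a b, (a, b) ∈ G → (b, a) ∉ H := fun a b hab hba =>
    (eq_empty_iff_forall_notMem.mp hD) (a, b) (mem_filter.mpr ⟨hab, hba⟩)
  ext ⟨a, b⟩
  constructor
  · intro hab
    exact (mem_or_swap_mem_of_skeleton_eq hGH hab).resolve_right (hnot a b hab)
  · intro hab
    exact (mem_or_swap_mem_of_skeleton_eq hGH.symm hab).resolve_right fun hba => hnot b a hba hab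

theorem transGen_insert {P : Finset (V × V)} {c d x y : V}
    (h : TransGen (arcRel (insert (c, d) P)) x y) :
    TransGen (arcRel P) x y ∨ ReflTransGen (arcRel P) x c ∧ ReflTransGen (arcRel P) d y := by
  induction h with
  | @single b hxb =>
    rcases mem_insert.mp hxb with hcd | hxb
    · obtain ⟨rfl, rfl⟩ := Prod.mk.inj hcd
      exact .inr ⟨.refl, .refl⟩
    · exact .inl (.single hxb)
  | @tail b e _ hbe ih =>
    rcases mem_insert.mp hbe with hcd | hbe
    · obtain ⟨rfl, rfl⟩ := Prod.mk.inj hcd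
      rcases ih with ih | ⟨hxc, -⟩
      exacts [.inr ⟨ih.to_reflTransGen, .refl⟩, .inr ⟨hxc, .refl⟩]
    · rcases ih with ih | ⟨hxc, hdb⟩
      exacts [.inl (ih.tail hbe), .inr ⟨hxc, hdb.tail hbe⟩]

theorem acyclic_reverseArc {G : Finset (V × V)} (hG : AcyclicF G) {v w : V} (hvw : (v, w) ∈ G)
    (hpath : ¬ TransGen (arcRel (G.erase (v, w))) v w) : AcyclicF (reverseArc G v w) := by
  intro x hx
  rcases transGen_insert hx with hx | ⟨hxw, hvx⟩
  · exact hG x (TransGen.mono (fun _ _ => mem_of_mem_erase) _ _ hx)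
  · rcases reflTransGen_iff_eq_or_transGen.mp (hvx.trans hxw) with rfl | hvw'
    exacts [hG _ (.single hvw), hpath hvw']

theorem exists_mem_disagreements_not_transGen_erase {G H : Finset (V × V)} (hG : AcyclicF G)
    (hH : AcyclicF H) (hGH : skeleton G = skeleton H) (hD : (disagreements G H).Nonempty) :
    ∃ v w, (v, w) ∈ disagreements G H ∧ ¬ TransGen (arcRel (G.erase (v, w))) v w := by
  obtain ⟨⟨v, w⟩, hvw, hmin⟩ := exists_min_image (disagreements G H)
    (fun p => (numAncestors G p.2 : ℤ) - numAncestors G p.1) hD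
  refine ⟨v, w, hvw, fun hpath => ?_⟩
  have hsub : ∀ a b, arcRel (G.erase (v, w)) a b → arcRel G a b := fun _ _ => mem_of_mem_erase
  rcases transGen_or_exists_reversed
      (fun a b hab => mem_or_swap_mem_of_skeleton_eq hGH (hsub a b hab)) hpath with
    hpathH | ⟨a, b, hab, hba, hva, hbw⟩
  · exact hH v (hpathH.tail (mem_filter.mp hvw).2)
  · have hlt := numAncestors_sub_lt_of_nested hG (ReflTransGen.mono hsub _ _ hva)
      (ReflTransGen.mono hsub _ _ hbw) (mem_erase.mp hab).1
    exact (hmin (a, b) (mem_filter.mpr ⟨hsub a b hab, hba⟩)).not_gt hlt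

theorem IsReversalSequence.cons {G : Finset (V × V)} (hG : AcyclicF G) {v w : V}
    (hvw : (v, w) ∈ G) {F : ℕ → Finset (V × V)} {k : ℕ} (hF : IsReversalSequence F k)
    (hF₀ : F 0 = reverseArc G v w) :
    IsReversalSequence (fun | 0 => G | t + 1 => F t) (k + 1) := by
  constructor
  · rintro (_ | t) ht
    exacts [hG, hF.1 t (by omega)]
  · rintro (_ | t) ht
    exacts [⟨v, w, hvw, hF₀⟩, hF.2 t (by omega)]

theorem exists_isReversalSequence {G H : Finset (V × V)} (hG : AcyclicF G) (hH : AcyclicF H)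
    (hGH : skeleton G = skeleton H) :
    ∃ F : ℕ → Finset (V × V), F 0 = G ∧ F (disagreements G H).card = H ∧
      IsReversalSequence F (disagreements G H).card := by
  induction hd : (disagreements G H).card generalizing G with
  | zero =>
    exact ⟨fun _ => G, rfl, eq_of_disagreements_eq_empty hGH (card_eq_zero.mp hd),
      fun _ _ => hG, fun t ht => absurd ht t.not_lt_zero⟩
  | succ d ih =>
    obtain ⟨v, w, hvw, hpath⟩ :=
      exists_mem_disagreements_not_transGen_erase hG hH hGH (card_pos.mp (hd ▸ d.succ_pos))
    obtain ⟨hvwG, hwvH⟩ := mem_filter.mp hvw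
    have hd' : (disagreements (reverseArc G v w) H).card = d := by
      rw [disagreements_reverseArc (swap_notMem_of_acyclic hH hwvH), card_erase_of_mem hvw, hd,
        Nat.add_sub_cancel]
    obtain ⟨F, hF₀, hFd, hF⟩ :=
      ih (acyclic_reverseArc hG hvwG hpath) ((skeleton_reverseArc hvwG).trans hGH) hd'
    exact ⟨fun | 0 => G | t + 1 => F t, rfl, hFd, hF.cons hG hvwG hF₀⟩

end ArcSet

open ArcSet in
theorem stmt2 {n : ℕ} (G H : Finset (Fin n × Fin n))
    (hG : AcyclicF G) (hH : AcyclicF H)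
    (hskel : G.image (fun p => s(p.1, p.2)) = H.image (fun p => s(p.1, p.2))) :
    ∃ (k : ℕ) (F : ℕ → Finset (Fin n × Fin n)),
      k ≤ (G.image (fun p => s(p.1, p.2))).card ∧
      F 0 = G ∧ F k = H ∧
      (∀ t ≤ k, AcyclicF (F t)) ∧
      ∀ t < k, ∃ i j, (i, j) ∈ F t ∧ F (t + 1) = insert (j, i) ((F t).erase (i, j)) := by
  obtain ⟨F, hF₀, hFk, hFacyclic, hFstep⟩ := exists_isReversalSequence hG hH hskel
  have hk : (disagreements G H).card ≤ (skeleton G).card :=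
    (card_skeleton_of_acyclic hG).symm ▸ Finset.card_filter_le _ _
  exact ⟨_, F, hk, hF₀, hFk, hFacyclic, hFstep⟩
end

section
/- For a DAG G on vertex set [n] and distinct vertices i, j, k: the induced subgraph of G on {i,j,k} is the v-structure i → j ← k (i.e., i → j and k → j are edges and i, k are not adjacent) if and only if c_G({i,j,k}) = 1 and c_G({i,k}) = 0. -/
theorem stmt5 {V : Type*} [DecidableEq V] (G : V → V → Prop) (hG : Acyclic G)
    (i j k : V) (h1 : i ≠ j) (h2 : i ≠ k) (h3 : j ≠ k) :
    (G i j ∧ G k j ∧ ¬ G i k ∧ ¬ G k i) ↔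
      (cimset G {i, j, k} = 1 ∧ cimset G {i, k} = 0) := by
  unfold cimset
  constructor
  · rintro ⟨hij, hkj, hik, hki⟩
    constructor
    · rw [if_pos]
      exact ⟨j, by simp, by
        intro x hx hxj
        simp only [Finset.mem_insert, Finset.mem_singleton] at hx
        rcases hx with rfl | rfl | rfl
        · exact hij
        · exact absurd rfl hxj
        · exact hkj⟩
    · rw [if_neg]
      rintro ⟨x, hx, hall⟩
      simp only [Finset.mem_insert, Finset.mem_singleton] at hx
      rcases hx with rfl | rfl
      · exact hki (hall k (by simp) h2.symm)
      · exact hik (hall i (by simp) h2)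
  · rintro ⟨ha, hb⟩
    split_ifs at ha hb with h h'
    · obtain ⟨x, hx, hall⟩ := h
      simp only [Finset.mem_insert, Finset.mem_singleton] at hx
      have hik : ¬ G i k := fun hg => h' ⟨k, by simp, by
        intro y hy hyk
        simp only [Finset.mem_insert, Finset.mem_singleton] at hy
        rcases hy with rfl | rfl
        · exact hg
        · exact absurd rfl hyk⟩
      have hki : ¬ G k i := fun hg => h' ⟨i, by simp, by
        intro y hy hyi
        simp only [Finset.mem_insert, Finset.mem_singleton] at hy
        rcases hy with rfl | rfl
        · exact absurd rfl hyi
        · exact hg⟩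
      rcases hx with rfl | rfl | rfl
      · exact absurd (hall k (by simp) h2.symm) hki
      · exact ⟨hall i (by simp) h1, hall k (by simp) h3.symm, hik, hki⟩
      · exact absurd (hall i (by simp) h2) hik
end

section
/- Let G be a DAG on [n], let i ∈ [n], and let S* ⊆ [n] \ {i} with |S*| ≥ 2 be such that no two vertices of S* are adjacent in G and no vertex of S* is adjacent to i in G. Let H be G together with all edges j → i for j ∈ S*, and assume H is acyclic. If D is any DAG on [n] whose skeleton contains the skeleton of G and is contained in the skeleton of H, and c_D(S* ∪ {i}) = 1, then all edges j → i for j ∈ S* are edges of D. -/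
theorem stmt8 {V : Type*} [DecidableEq V] (G : V → V → Prop) (hG : Acyclic G)
    (i : V) (S : Finset V) (hiS : i ∉ S) (hcard : 2 ≤ S.card)
    (hindep : ∀ s ∈ S, ∀ s' ∈ S, ¬ G s s')
    (hni : ∀ s ∈ S, ¬ G s i ∧ ¬ G i s)
    (hH : Acyclic (fun a b => G a b ∨ (a ∈ S ∧ b = i)))
    (D : V → V → Prop) (hD : Acyclic D)
    (hlow : ∀ a b, (G a b ∨ G b a) → (D a b ∨ D b a))
    (hup : ∀ a b, (D a b ∨ D b a) →
      ((G a b ∨ (a ∈ S ∧ b = i)) ∨ (G b a ∨ (b ∈ S ∧ a = i))))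
    (hc : cimset D (insert i S) = 1) :
    ∀ j ∈ S, D j i := by
  unfold cimset at hc
  split at hc
  case isFalse => simp at hc
  case isTrue h =>
    obtain ⟨t, htmem, ht⟩ := h
    rcases Finset.mem_insert.mp htmem with rfl | htS
    · intro j hj
      exact ht j (Finset.mem_insert_of_mem hj) (fun hji => hiS (hji ▸ hj))
    · exfalso
      obtain ⟨s, hsS, hst⟩ : ∃ s ∈ S, s ≠ t := by
        by_contra hcon
        push_neg at hcon
        have : S ⊆ {t} := fun x hx => Finset.mem_singleton.mpr (hcon x hx)
        have := Finset.card_le_card this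
        simp at this
        omega
      have hDst : D s t := ht s (Finset.mem_insert_of_mem hsS) hst
      have hti : t ≠ i := fun h => hiS (h ▸ htS)
      have hsi : s ≠ i := fun h => hiS (h ▸ hsS)
      rcases hup s t (Or.inl hDst) with (hG1 | ⟨_, h⟩) | (hG2 | ⟨_, h⟩)
      · exact hindep s hsS t htS hG1
      · exact hti h
      · exact hindep t htS s hsS hG2
      · exact hsi h
end

section
/- Let P be a convex polytope with vertex v, and let u₁, u₂ be nonzero vectors such that v + u₁, v + u₂, and v + u₁ + u₂ are all vertices of P. Then the segment conv(v, v + u₁ + u₂) is not an edge (one-dimensional face) of P. -/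
/-!
Let `w = v + u₁ + u₂` and suppose `f` is maximized on `P` exactly along `[v, w]`. Since
`f (v + u₁) + f (v + u₂) = f v + f w` and neither summand on the left exceeds the maximum,
`v + u₁` also maximizes `f`, so it lies on `[v, w]`. Being an extreme point of `P`, it must then
be an endpoint of that segment, forcing `u₁ = 0` or `u₂ = 0`.
-/

theorem IsMaxOn.of_add_eq_add {E β F : Type*} [AddCommMonoid E] [AddCommMonoid β] [PartialOrder β]
    [IsOrderedCancelAddMonoid β] [FunLike F E β] [AddHomClass F E β] {f : F} {P : Set E}
    {a b x y : E} (ha : IsMaxOn f P a) (hb : IsMaxOn f P b) (hy : y ∈ P)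
    (hxy : x + y = a + b) : IsMaxOn f P x := by
  have hfa : f a ≤ f x := by
    refine le_of_add_le_add_right (a := f y) ?_
    calc f a + f y ≤ f a + f b := by gcongr; exact hb hy
      _ = f x + f y := by rw [← map_add, ← map_add, hxy]
  exact fun z hz => (ha hz).trans hfa

theorem stmt9_general {d : ℕ}
    (P : Set (EuclideanSpace ℝ (Fin d)))
    (v u₁ u₂ : EuclideanSpace ℝ (Fin d)) (hu₁ : u₁ ≠ 0) (hu₂ : u₂ ≠ 0)
    (hv1 : v + u₁ ∈ Set.extremePoints ℝ P)
    (hv2 : v + u₂ ∈ Set.extremePoints ℝ P) :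
    ¬ ∃ f : EuclideanSpace ℝ (Fin d) →ₗ[ℝ] ℝ,
      {x | x ∈ P ∧ ∀ y ∈ P, f y ≤ f x} = segment ℝ v (v + u₁ + u₂) := by
  rintro ⟨f, hf⟩
  have hmax {x : EuclideanSpace ℝ (Fin d)} (hx : x ∈ segment ℝ v (v + u₁ + u₂)) :
      x ∈ P ∧ IsMaxOn f P x := by
    rw [← hf] at hx
    exact ⟨hx.1, isMaxOn_iff.2 hx.2⟩
  obtain ⟨hvP, hv_max⟩ := hmax (left_mem_segment ℝ _ _)
  obtain ⟨hwP, hw_max⟩ := hmax (right_mem_segment ℝ _ _)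
  have hv1_max : IsMaxOn f P (v + u₁) :=
    hv_max.of_add_eq_add hw_max hv2.1 (by abel)
  have hv1_mem : v + u₁ ∈ segment ℝ v (v + u₁ + u₂) := by
    rw [← hf]
    exact ⟨hv1.1, isMaxOn_iff.1 hv1_max⟩
  rcases (mem_extremePoints_iff_forall_segment.1 hv1).2 v hvP _ hwP hv1_mem with h | h
  · exact hu₁ (by simpa using h)
  · exact hu₂ (by simpa using h)

theorem stmt9 {d : ℕ} (t : Finset (EuclideanSpace ℝ (Fin d)))
    (P : Set (EuclideanSpace ℝ (Fin d))) (hP : P = convexHull ℝ ↑t)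
    (v u₁ u₂ : EuclideanSpace ℝ (Fin d)) (hu₁ : u₁ ≠ 0) (hu₂ : u₂ ≠ 0)
    (hv : v ∈ Set.extremePoints ℝ P)
    (hv1 : v + u₁ ∈ Set.extremePoints ℝ P)
    (hv2 : v + u₂ ∈ Set.extremePoints ℝ P)
    (hv12 : v + u₁ + u₂ ∈ Set.extremePoints ℝ P) :
    ¬ ∃ f : EuclideanSpace ℝ (Fin d) →ₗ[ℝ] ℝ,
      {x | x ∈ P ∧ ∀ y ∈ P, f y ≤ f x} = segment ℝ v (v + u₁ + u₂) :=
  stmt9_general P v u₁ u₂ hu₁ hu₂ hv1 hv2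
end

section
/- Let G be a DAG, let i₁, ..., i_k (k ≥ 2) be distinct vertices and S₁, ..., S_k be vertex sets with cl_G(i_t) ∩ S_t = ∅ for all t. Let H be obtained from G by adding all edges s → i_t for s ∈ S_t, t = 1...k, and assume H is acyclic. Let G₁ be G with the edges s → i₁ (s ∈ S₁) added, and G₂ be G with the edges s → i_t (s ∈ S_t, 2 ≤ t ≤ k) added. Then c_G + c_H = c_{G₁} + c_{G₂} as vectors indexed by subsets S ⊆ [n] with |S| ≥ 2. -/
private lemma key_stmt10 (p q r s : Prop) [Decidable p] [Decidable q] [Decidable r]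
    [Decidable s] (hpr : p → r) (hps : p → s) (hrq : r → q) (hsq : s → q)
    (hqo : q → r ∨ s) (hrs : r → s → p) :
    (if p then (1:ℕ) else 0) + (if q then 1 else 0) =
      (if r then 1 else 0) + (if s then 1 else 0) := by
  by_cases hp : p
  · rw [if_pos hp, if_pos (hrq (hpr hp)), if_pos (hpr hp), if_pos (hps hp)]
  · rw [if_neg hp]
    by_cases hq' : q
    · rw [if_pos hq']
      rcases hqo hq' with hr | hs
      · rw [if_pos hr, if_neg (fun hs => hp (hrs hr hs))]
      · rw [if_pos hs, if_neg (fun hr => hp (hrs hr hs))]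
    · rw [if_neg hq', if_neg (fun hr => hq' (hrq hr)), if_neg (fun hs => hq' (hsq hs))]

set_option maxHeartbeats 2000000 in
theorem stmt10 {V : Type*} [DecidableEq V] {k : ℕ} (hk : 2 ≤ k)
    (G : V → V → Prop) (hG : Acyclic G)
    (i : Fin k → V) (hinj : Function.Injective i)
    (S : Fin k → Finset V)
    (hcl : ∀ t, ∀ s ∈ S t, s ≠ i t ∧ ¬ G s (i t) ∧ ¬ G (i t) s)
    (hH : Acyclic (fun a b => G a b ∨ ∃ t, a ∈ S t ∧ b = i t)) :
    ∀ A : Finset V, 2 ≤ A.card →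
      cimset G A + cimset (fun a b => G a b ∨ ∃ t, a ∈ S t ∧ b = i t) A =
        cimset (fun a b => G a b ∨ (a ∈ S ⟨0, by omega⟩ ∧ b = i ⟨0, by omega⟩)) A +
        cimset (fun a b => G a b ∨ ∃ t, t ≠ (⟨0, by omega⟩ : Fin k) ∧ a ∈ S t ∧ b = i t) A := by
  intro A hA
  classical
  have hk0 : (0 : ℕ) < k := by omega
  have m1 : (∃ j ∈ A, ∀ a ∈ A, a ≠ j → G a j) →
      (∃ j ∈ A, ∀ a ∈ A, a ≠ j → (G a j ∨ (a ∈ S ⟨0, hk0⟩ ∧ j = i ⟨0, hk0⟩))) := by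
    rintro ⟨j, hj, hall⟩; exact ⟨j, hj, fun a ha hne => Or.inl (hall a ha hne)⟩
  have m2 : (∃ j ∈ A, ∀ a ∈ A, a ≠ j → G a j) →
      (∃ j ∈ A, ∀ a ∈ A, a ≠ j →
        (G a j ∨ ∃ t, t ≠ (⟨0, hk0⟩ : Fin k) ∧ a ∈ S t ∧ j = i t)) := by
    rintro ⟨j, hj, hall⟩; exact ⟨j, hj, fun a ha hne => Or.inl (hall a ha hne)⟩
  have m3 : (∃ j ∈ A, ∀ a ∈ A, a ≠ j → (G a j ∨ (a ∈ S ⟨0, hk0⟩ ∧ j = i ⟨0, hk0⟩))) →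
      (∃ j ∈ A, ∀ a ∈ A, a ≠ j → (G a j ∨ ∃ t, a ∈ S t ∧ j = i t)) := by
    rintro ⟨j, hj, hall⟩
    refine ⟨j, hj, fun a ha hne => ?_⟩
    rcases hall a ha hne with h | ⟨hs, he⟩
    · exact Or.inl h
    · exact Or.inr ⟨⟨0, hk0⟩, hs, he⟩
  have m4 : (∃ j ∈ A, ∀ a ∈ A, a ≠ j →
        (G a j ∨ ∃ t, t ≠ (⟨0, hk0⟩ : Fin k) ∧ a ∈ S t ∧ j = i t)) →
      (∃ j ∈ A, ∀ a ∈ A, a ≠ j → (G a j ∨ ∃ t, a ∈ S t ∧ j = i t)) := by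
    rintro ⟨j, hj, hall⟩
    refine ⟨j, hj, fun a ha hne => ?_⟩
    rcases hall a ha hne with h | ⟨t, _, hs, he⟩
    · exact Or.inl h
    · exact Or.inr ⟨t, hs, he⟩
  have msplit : (∃ j ∈ A, ∀ a ∈ A, a ≠ j → (G a j ∨ ∃ t, a ∈ S t ∧ j = i t)) →
      (∃ j ∈ A, ∀ a ∈ A, a ≠ j → (G a j ∨ (a ∈ S ⟨0, hk0⟩ ∧ j = i ⟨0, hk0⟩))) ∨
      (∃ j ∈ A, ∀ a ∈ A, a ≠ j →
        (G a j ∨ ∃ t, t ≠ (⟨0, hk0⟩ : Fin k) ∧ a ∈ S t ∧ j = i t)) := by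
    rintro ⟨j, hj, hall⟩
    by_cases hex : ∃ t, j = i t
    · obtain ⟨t, ht⟩ := hex
      by_cases ht0 : t = (⟨0, hk0⟩ : Fin k)
      · left
        refine ⟨j, hj, fun a ha hne => ?_⟩
        rcases hall a ha hne with h | ⟨t', hs, he⟩
        · exact Or.inl h
        · have htt : t' = t := hinj (he.symm.trans ht)
          subst htt; subst ht0
          exact Or.inr ⟨hs, he⟩
      · right
        refine ⟨j, hj, fun a ha hne => ?_⟩
        rcases hall a ha hne with h | ⟨t', hs, he⟩
        · exact Or.inl h
        · have htt : t' = t := hinj (he.symm.trans ht)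
          exact Or.inr ⟨t', htt ▸ ht0, hs, he⟩
    · left
      refine ⟨j, hj, fun a ha hne => ?_⟩
      rcases hall a ha hne with h | ⟨t', hs, he⟩
      · exact Or.inl h
      · exact absurd ⟨t', he⟩ hex
  have mboth : (∃ j ∈ A, ∀ a ∈ A, a ≠ j → (G a j ∨ (a ∈ S ⟨0, hk0⟩ ∧ j = i ⟨0, hk0⟩))) →
      (∃ j ∈ A, ∀ a ∈ A, a ≠ j →
        (G a j ∨ ∃ t, t ≠ (⟨0, hk0⟩ : Fin k) ∧ a ∈ S t ∧ j = i t)) →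
      (∃ j ∈ A, ∀ a ∈ A, a ≠ j → G a j) := by
    rintro ⟨j1, hj1, hall1⟩ ⟨j2, hj2, hall2⟩
    by_cases hjj : j1 = j2
    · subst hjj
      refine ⟨j1, hj1, fun a ha hne => ?_⟩
      rcases hall1 a ha hne with h | ⟨hs1, he1⟩
      · exact h
      · rcases hall2 a ha hne with h | ⟨t, ht0, hs2, he2⟩
        · exact h
        · exact absurd (hinj (he2.symm.trans he1)) ht0
    · exfalso
      have e12 : G j1 j2 ∨ ∃ t, j1 ∈ S t ∧ j2 = i t := by
        rcases hall2 j1 hj1 hjj with h | ⟨t, _, hs, he⟩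
        · exact Or.inl h
        · exact Or.inr ⟨t, hs, he⟩
      have e21 : G j2 j1 ∨ ∃ t, j2 ∈ S t ∧ j1 = i t := by
        rcases hall1 j2 hj2 (fun h => hjj h.symm) with h | ⟨hs, he⟩
        · exact Or.inl h
        · exact Or.inr ⟨⟨0, hk0⟩, hs, he⟩
      exact hH j1 (Relation.TransGen.head e12 (Relation.TransGen.single e21))
  simp only [cimset]
  by_cases h1 : (∃ j ∈ A, ∀ a ∈ A, a ≠ j → G a j)
  · rw [if_pos h1, if_pos (m3 (m1 h1)), if_pos (m1 h1), if_pos (m2 h1)]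
  · rw [if_neg h1]
    by_cases h2 : (∃ j ∈ A, ∀ a ∈ A, a ≠ j → (G a j ∨ ∃ t, a ∈ S t ∧ j = i t))
    · rw [if_pos h2]
      rcases msplit h2 with h3 | h4
      · rw [if_pos h3, if_neg (fun h4 => h1 (mboth h3 h4))]
      · rw [if_pos h4, if_neg (fun h3 => h1 (mboth h3 h4))]
    · rw [if_neg h2, if_neg (fun h3 => h2 (m3 h3)), if_neg (fun h4 => h2 (m4 h4))]
end

section
/- Let G and H be two orientations of the undirected path v₁ − ... − v_n such that the set of edges on which they differ forms a connected subpath T of the path. Then the number of v-structures of G and the number of v-structures of H differ by at most one. -/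
/-!
Write `Δⱼ` for the change in the indicator of a v-structure at vertex `j` when passing from `d`
to `e`. Outside the reversed segment `[a, b)` nothing changes. Strictly inside it, reversing both
edges at `j` gives `Δⱼ = d j - d (j - 1)`, which telescopes to `d (b - 1) - d a`. The two boundary
vertices contribute terms that combine with `- d a` to a value in `[-1, 0]` and with `d (b - 1)`
to a value in `[0, 1]`, so the total change lies in `[-1, 1]`.
-/

def vcount (n : ℕ) (d : ℕ → Bool) : ℕ :=
  ((Finset.Ico 1 (n - 1)).filter (fun j => d (j - 1) = true ∧ d j = false)).card

open Finset

def vTerm (x : ℕ → Bool) (j : ℕ) : ℤ :=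
  if x (j - 1) = true ∧ x j = false then 1 else 0

theorem vcount_eq_sum_vTerm (n : ℕ) (x : ℕ → Bool) :
    (vcount n x : ℤ) = ∑ j ∈ Ico 1 (n - 1), vTerm x j := by
  rw [vcount, card_filter]
  push_cast
  rfl

section vTerm

variable {x y : ℕ → Bool} {j : ℕ}

theorem vTerm_congr (h₁ : y (j - 1) = x (j - 1)) (h₂ : y j = x j) : vTerm y j = vTerm x j := by
  simp only [vTerm, h₁, h₂]

theorem vTerm_sub_vTerm_of_flip (h₁ : y (j - 1) = !x (j - 1)) (h₂ : y j = !x j) :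
    vTerm y j - vTerm x j = (x j).toNat - (x (j - 1)).toNat := by
  simp only [vTerm, h₁, h₂]
  cases x (j - 1) <;> cases x j <;> rfl

theorem vTerm_sub_vTerm_sub_toNat_mem_Icc (h₁ : y (j - 1) = x (j - 1)) (h₂ : y j = !x j) :
    vTerm y j - vTerm x j - (x j).toNat ∈ Set.Icc (-1 : ℤ) 0 := by
  simp only [vTerm, h₁, h₂]
  cases x (j - 1) <;> cases x j <;> decide

theorem vTerm_sub_vTerm_add_toNat_mem_Icc (h₁ : y (j - 1) = !x (j - 1)) (h₂ : y j = x j) :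
    vTerm y j - vTerm x j + (x (j - 1)).toNat ∈ Set.Icc (0 : ℤ) 1 := by
  simp only [vTerm, h₁, h₂]
  cases x (j - 1) <;> cases x j <;> decide

end vTerm

section Flip

variable {d e : ℕ → Bool} {a b m : ℕ}

theorem sum_Ico_vTerm_sub_sub_toNat_mem_Icc (hflip : e a = !d a) (hagree : ∀ i < a, e i = d i) :
    ∑ j ∈ Ico 1 (a + 1), (vTerm e j - vTerm d j) - (d a).toNat ∈ Set.Icc (-1 : ℤ) 0 := by
  rcases Nat.eq_zero_or_pos a with rfl | ha
  · cases d 0 <;> simp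
  have hzero : ∑ j ∈ Ico 1 a, (vTerm e j - vTerm d j) = 0 :=
    sum_eq_zero fun j hj => by
      rw [mem_Ico] at hj
      rw [vTerm_congr (hagree _ (by omega)) (hagree _ hj.2), sub_self]
  rw [sum_Ico_succ_top ha, hzero, zero_add]
  exact vTerm_sub_vTerm_sub_toNat_mem_Icc (hagree _ (by omega)) hflip

theorem sum_Ico_vTerm_sub_of_flip (hab : a < b) (hflip : ∀ i, a ≤ i → i < b → e i = !d i) :
    ∑ j ∈ Ico (a + 1) b, (vTerm e j - vTerm d j) = (d (b - 1)).toNat - (d a).toNat := by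
  have hterm : ∀ j ∈ Ico (a + 1) b, vTerm e j - vTerm d j
      = ((d ((j + 1) - 1)).toNat : ℤ) - (d (j - 1)).toNat := fun j hj => by
    rw [mem_Ico] at hj
    rw [Nat.add_sub_cancel, vTerm_sub_vTerm_of_flip (hflip _ (by omega) (by omega))
      (hflip _ (by omega) hj.2)]
  rw [sum_congr rfl hterm, sum_Ico_sub (fun i => ((d (i - 1)).toNat : ℤ)) (by omega),
    Nat.add_sub_cancel]

theorem sum_Ico_vTerm_sub_add_toNat_mem_Icc (hbm : b ≤ m) (hflip : e (b - 1) = !d (b - 1))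
    (hagree : ∀ i, b ≤ i → i < m → e i = d i) :
    ∑ j ∈ Ico b m, (vTerm e j - vTerm d j) + (d (b - 1)).toNat ∈ Set.Icc (0 : ℤ) 1 := by
  rcases hbm.eq_or_lt with rfl | hbm
  · cases d (b - 1) <;> simp
  have hzero : ∑ j ∈ Ico (b + 1) m, (vTerm e j - vTerm d j) = 0 :=
    sum_eq_zero fun j hj => by
      rw [mem_Ico] at hj
      rw [vTerm_congr (hagree _ (by omega) (by omega)) (hagree _ (by omega) hj.2), sub_self]
  rw [sum_eq_sum_Ico_succ_bot hbm, hzero, add_zero]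
  exact vTerm_sub_vTerm_add_toNat_mem_Icc hflip (hagree _ le_rfl hbm)

theorem sum_Ico_vTerm_sub_mem_Icc (hab : a < b) (hbm : b ≤ m)
    (hflip : ∀ i, a ≤ i → i < b → e i = !d i) (hagree : ∀ i < m, (i < a ∨ b ≤ i) → e i = d i) :
    ∑ j ∈ Ico 1 m, (vTerm e j - vTerm d j) ∈ Set.Icc (-1 : ℤ) 1 := by
  rw [← sum_Ico_consecutive _ (by omega : 1 ≤ b) hbm,
    ← sum_Ico_consecutive _ (by omega : 1 ≤ a + 1) (by omega : a + 1 ≤ b),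
    sum_Ico_vTerm_sub_of_flip hab hflip]
  have hleft := sum_Ico_vTerm_sub_sub_toNat_mem_Icc (hflip a le_rfl hab)
    fun i hi => hagree i (by omega) (Or.inl hi)
  have hright := sum_Ico_vTerm_sub_add_toNat_mem_Icc hbm (hflip _ (by omega) (by omega))
    fun i hi him => hagree i him (Or.inr hi)
  constructor <;> linarith [hleft.1, hleft.2, hright.1, hright.2]

end Flip

theorem stmt14_general (n : ℕ) (d e : ℕ → Bool) (a b : ℕ)
    (hab : a < b) (hb : b ≤ n - 1)
    (hdiff : ∀ i < n - 1, (d i ≠ e i ↔ a ≤ i ∧ i < b)) :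
    vcount n d ≤ vcount n e + 1 ∧ vcount n e ≤ vcount n d + 1 := by
  have hflip : ∀ i, a ≤ i → i < b → e i = !d i := fun i hai hib =>
    Bool.eq_not_iff.2 (Ne.symm ((hdiff i (by omega)).2 ⟨hai, hib⟩))
  have hagree : ∀ i < n - 1, (i < a ∨ b ≤ i) → e i = d i := fun i hi hout => by
    by_contra hne
    have := (hdiff i hi).1 (Ne.symm hne)
    omega
  have hsum := sum_Ico_vTerm_sub_mem_Icc hab hb hflip hagree
  rw [sum_sub_distrib, ← vcount_eq_sum_vTerm, ← vcount_eq_sum_vTerm] at hsum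
  obtain ⟨hlower, hupper⟩ := hsum
  omega

theorem stmt14 (n : ℕ) (hn : 2 ≤ n) (d e : ℕ → Bool) (a b : ℕ)
    (hab : a < b) (hb : b ≤ n - 1)
    (hdiff : ∀ i < n - 1, (d i ≠ e i ↔ a ≤ i ∧ i < b)) :
    vcount n d ≤ vcount n e + 1 ∧ vcount n e ≤ vcount n d + 1 :=
  stmt14_general n d e a b hab hb hdiff
end

section
/- Two DAGs G and H on the same vertex set have equal characteristic imsets if and only if c_G(S) = c_H(S) for all subsets S of size 2 or 3. -/
def VStruct {V : Type*} (G : V → V → Prop) (a j c : V) : Prop :=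
  a ≠ c ∧ G a j ∧ G c j ∧ ¬ G a c ∧ ¬ G c a

def skel {V : Type*} (G : V → V → Prop) : SimpleGraph V where
  Adj a b := (G a b ∨ G b a) ∧ a ≠ b
  symm := ⟨fun a b h => ⟨h.1.symm, h.2.symm⟩⟩
  loopless := ⟨fun a h => h.2 rfl⟩
/-!
If `S` has a sink `i` in `G` (every other vertex of `S` is a parent of `i`), then in `H` every
`j ∈ S` is still adjacent to `i`, and two non-adjacent parents `j, k` of `i` form a v-structure
`j → i ← k`, which `H` shares. Either `i` is also a sink in `H`, or we take an `H`-child `m` of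
`i` in `S` that is maximal among these children for the `H`-reachability order; acyclicity of
`H` then forces every other vertex of `S` to be an `H`-parent of `m`.
-/

section

open Relation

variable {V : Type*} {G H : V → V → Prop}

/-- `S ⊆ pa_G(i) ∪ {i}` for some `i ∈ S`; `cimset G S` is the indicator of this property. -/
def HasSink (G : V → V → Prop) (S : Finset V) : Prop :=
  ∃ i ∈ S, ∀ j ∈ S, j ≠ i → G j i

theorem cimset_eq_cimset_iff {S : Finset V} :
    cimset G S = cimset H S ↔ (HasSink G S ↔ HasSink H S) := by
  unfold cimset HasSink
  split_ifs with hG hH hH <;> simp [hG, hH]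

theorem Acyclic.ne_of_rel (hG : Acyclic G) {a b : V} (h : G a b) : a ≠ b := by
  rintro rfl
  exact hG a (.single h)

theorem Acyclic.exists_maximal (hG : Acyclic G) {A : Finset V} (hA : A.Nonempty) :
    ∃ m ∈ A, ∀ a ∈ A, ¬ TransGen G m a := by
  have : IsStrictOrder V (flip (TransGen G)) :=
    { irrefl := hG, trans := fun _ _ _ hab hbc => hbc.trans hab }
  obtain ⟨m, hm, hmax⟩ :=
    (Set.wellFoundedOn_iff.mp (A.finite_toSet.wellFoundedOn (r := flip (TransGen G)))).has_min
      (A : Set V) hA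
  exact ⟨m, hm, fun a ha hma => hmax a ha ⟨hma, ha, hm⟩⟩

theorem skel_eq_iff : skel G = skel H ↔ ∀ a b, a ≠ b → (G a b ∨ G b a ↔ H a b ∨ H b a) := by
  refine ⟨fun h a b hab => ?_, fun h => ?_⟩
  · have := congrArg (fun K : SimpleGraph V => K.Adj a b) h
    simpa [skel, hab] using this
  · ext a b
    simp only [skel]
    exact ⟨fun ⟨hG, hab⟩ => ⟨(h a b hab).mp hG, hab⟩, fun ⟨hH, hab⟩ => ⟨(h a b hab).mpr hH, hab⟩⟩

section Finsets

variable [DecidableEq V]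

theorem hasSink_pair_iff {a b : V} (hab : a ≠ b) : HasSink G {a, b} ↔ G a b ∨ G b a := by
  constructor
  · rintro ⟨i, hi, hsink⟩
    simp only [Finset.mem_insert, Finset.mem_singleton] at hi
    rcases hi with rfl | rfl
    · exact .inr (hsink b (by simp) hab.symm)
    · exact .inl (hsink a (by simp) hab)
  · rintro (h | h)
    · exact ⟨b, by simp, by simp_all⟩
    · exact ⟨a, by simp, by simp_all⟩

theorem HasSink.rel_of_not_adj {a c m : V} (hS : HasSink G {a, c, m}) (hac : a ≠ c)
    (ham : a ≠ m) (hcm : c ≠ m) (hnac : ¬ G a c) (hnca : ¬ G c a) : G a m ∧ G c m := by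
  obtain ⟨i, hi, hsink⟩ := hS
  simp only [Finset.mem_insert, Finset.mem_singleton] at hi
  rcases hi with rfl | rfl | rfl
  · exact absurd (hsink c (by simp) hac.symm) hnca
  · exact absurd (hsink a (by simp) hac) hnac
  · exact ⟨hsink a (by simp) ham, hsink c (by simp) hcm⟩

theorem skel_eq_of_cimset_eq (h : ∀ S : Finset V, S.card = 2 → cimset G S = cimset H S) :
    skel G = skel H :=
  skel_eq_iff.mpr fun a b hab => by
    rw [← hasSink_pair_iff hab, ← hasSink_pair_iff hab, ← cimset_eq_cimset_iff]
    exact h _ (Finset.card_pair hab)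

theorem VStruct.of_cimset_eq (hG : Acyclic G)
    (h : ∀ S : Finset V, (S.card = 2 ∨ S.card = 3) → cimset G S = cimset H S) {a j c : V}
    (hv : VStruct G a j c) : VStruct H a j c := by
  obtain ⟨hac, haj, hcj, hnac, hnca⟩ := hv
  obtain ⟨hnac', hnca'⟩ : ¬ H a c ∧ ¬ H c a := by
    rw [← not_or, ← skel_eq_iff.mp (skel_eq_of_cimset_eq fun S hS => h S (.inl hS)) a c hac]
    exact not_or.mpr ⟨hnac, hnca⟩
  have hGS : HasSink G {a, c, j} := ⟨j, by simp, by
    simp only [Finset.mem_insert, Finset.mem_singleton]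
    rintro k (rfl | rfl | rfl) hk
    exacts [haj, hcj, absurd rfl hk]⟩
  have hcard : ({a, c, j} : Finset V).card = 3 := by
    rw [Finset.card_insert_of_notMem (by simp [hac, hG.ne_of_rel haj]),
      Finset.card_pair (hG.ne_of_rel hcj)]
  have hHS := (cimset_eq_cimset_iff.mp (h _ (.inr hcard))).mp hGS
  obtain ⟨haj', hcj'⟩ :=
    hHS.rel_of_not_adj hac (hG.ne_of_rel haj) (hG.ne_of_rel hcj) hnac' hnca'
  exact ⟨hac, haj', hcj', hnac', hnca'⟩

end Finsets

theorem sink_of_maximal_child (hH : Acyclic H) (hskel : skel G = skel H)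
    (hv : ∀ a j c, VStruct G a j c → VStruct H a j c) {S : Finset V} {i m : V}
    (hpar : ∀ j ∈ S, j ≠ i → G j i) (hmS : m ∈ S) (him : H i m)
    (hmax : ∀ j ∈ S, H i j → ¬ TransGen H m j) :
    ∀ j ∈ S, j ≠ m → H j m := by
  have hadj : ∀ {a b}, a ≠ b → (G a b ∨ G b a ↔ H a b ∨ H b a) := skel_eq_iff.mp hskel _ _
  intro j hj hjm
  by_cases hji : j = i
  · exact hji ▸ him
  have hmi : m ≠ i := (hH.ne_of_rel him).symm
  -- were `j`, `m` non-adjacent, `j → i ← m` would be a v-structure of `G`, hence of `H`,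
  -- closing the cycle `i → m → i`
  have hjm_adj : H j m ∨ H m j := by
    by_contra hn
    have hnG : ¬ (G j m ∨ G m j) := fun h => hn ((hadj hjm).mp h)
    have hvH := hv j i m
      ⟨hjm, hpar j hj hji, hpar m hmS hmi, fun h => hnG (.inl h), fun h => hnG (.inr h)⟩
    exact hH i (.head him (.single hvH.2.2.1))
  refine hjm_adj.resolve_right fun hmj => ?_
  by_cases hij : H i j
  · exact hmax j hj hij (.single hmj)
  · have hji' : H j i := ((hadj hji).mp (.inl (hpar j hj hji))).resolve_right hij
    exact hH i (.head him (.head hmj (.single hji')))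

theorem HasSink.of_skel_eq (hH : Acyclic H) (hskel : skel G = skel H)
    (hv : ∀ a j c, VStruct G a j c → VStruct H a j c) {S : Finset V} (hS : HasSink G S) :
    HasSink H S := by
  classical
  obtain ⟨i, hi, hpar⟩ := hS
  rcases (S.filter (H i ·)).eq_empty_or_nonempty with hnone | hchild
  · refine ⟨i, hi, fun j hj hji => ?_⟩
    exact ((skel_eq_iff.mp hskel j i hji).mp (.inl (hpar j hj hji))).resolve_right
      (Finset.filter_eq_empty_iff.mp hnone hj)
  · obtain ⟨m, hm, hmax⟩ := hH.exists_maximal hchild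
    rw [Finset.mem_filter] at hm
    exact ⟨m, hm.1, sink_of_maximal_child hH hskel hv hpar hm.1 hm.2
      fun j hj hij => hmax j (Finset.mem_filter.mpr ⟨hj, hij⟩)⟩

end

theorem stmt15_general {V : Type*} (G H : V → V → Prop)
    (hG : Acyclic G) (hH : Acyclic H) :
    (∀ S : Finset V, 2 ≤ S.card → cimset G S = cimset H S) ↔
    (∀ S : Finset V, (S.card = 2 ∨ S.card = 3) → cimset G S = cimset H S) := by
  classical
  refine ⟨fun h S hS => h S (by omega), fun h S _ => ?_⟩
  have hskel := skel_eq_of_cimset_eq fun S hS => h S (.inl hS)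
  have h' : ∀ S : Finset V, (S.card = 2 ∨ S.card = 3) → cimset H S = cimset G S :=
    fun S hS => (h S hS).symm
  exact cimset_eq_cimset_iff.mpr
    ⟨HasSink.of_skel_eq hH hskel fun _ _ _ => VStruct.of_cimset_eq hG h,
      HasSink.of_skel_eq hG hskel.symm fun _ _ _ => VStruct.of_cimset_eq hH h'⟩

theorem stmt15 {V : Type*} [DecidableEq V] (G H : V → V → Prop)
    (hG : Acyclic G) (hH : Acyclic H) :
    (∀ S : Finset V, 2 ≤ S.card → cimset G S = cimset H S) ↔
    (∀ S : Finset V, (S.card = 2 ∨ S.card = 3) → cimset G S = cimset H S) :=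
  stmt15_general G H hG hH
end
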